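/- arXiv:2010.03787 — 2 statements merged into one kernel-verified Lean document; each statement's English description precedes it below -/
import Mathlib

section
/- Let ρ : ℍ → M₂(ℂ) be the embedding ρ(a + b·i + c·j + d·k) = [[a + b·i, c + d·i], [−c + d·i, a − b·i]], and regard the space ℂ² of complex column vectors as a left ℍ-module via v ↦ ρ(q)·v. Then the ℝ-bilinear map sending (v, c) with v = (a, b) ∈ ℂ² and c ∈ ℂ to the matrix [[a·c, −b̄·c], [b·c, ā·c]] induces a bijective ℂ-linear map φ : ℂ² ⊗_ℝ ℂ → M₂(ℂ) (ℂ acting on the right tensor factor) which satisfies φ((ρ(q)·v) ⊗ c) = ρ(q)·φ(v ⊗ c) for all q ∈ ℍ, v ∈ ℂ², c ∈ ℂ, and φ((d·v) ⊗ c) = φ(v ⊗ c)·[[d, 0], [0, d̄]] for all d ∈ ℂ. -/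
/-!
The matrix `!![a, -b̄; b, ā]` is the quaternionic matrix with first column `v = (a, b)`.
Matrices of the shape `!![z, w; -w̄, z̄]`, among them every `ρ(q)`, commute with the
antilinear map `v ↦ (-v̄₁, v̄₀)` producing the second column, so `v ↦ !![a, -b̄; b, ā]` is
`ρ`-equivariant, while scaling `v` by `d` scales the two columns by `d` and `d̄`.
Extending scalars gives `φ (c ⊗ v) = c • !![a, -b̄; b, ā]`; it is onto, and both sides have
complex dimension `4`, so it is bijective.
-/

open Quaternion Matrix TensorProduct

/-- The matrix `ρ(a + b i + c j + d k) = [[a + b i, c + d i],[−c + d i, a − b i]]`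
representing a quaternion, via which `ℂ²` (column vectors) is a left `ℍ`-module. -/
def quatMat (q : ℍ[ℝ]) : Matrix (Fin 2) (Fin 2) ℂ :=
  !![(⟨q.re, q.imI⟩ : ℂ), (⟨q.imJ, q.imK⟩ : ℂ);
     (⟨-q.imJ, q.imK⟩ : ℂ), (⟨q.re, -q.imI⟩ : ℂ)]

section

variable {R : Type*} [CommRing R] [StarRing R]

def quatMatOfColumn (v : Fin 2 → R) : Matrix (Fin 2) (Fin 2) R :=
  !![v 0, -star (v 1); v 1, star (v 0)]

theorem quatMatOfColumn_mulVec (z w : R) (v : Fin 2 → R) :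
    quatMatOfColumn (!![z, w; -star w, star z] *ᵥ v) =
      !![z, w; -star w, star z] * quatMatOfColumn v := by
  ext i j
  fin_cases i <;> fin_cases j <;>
    simp [quatMatOfColumn, mulVec, dotProduct, Fin.sum_univ_two, add_comm]

theorem quatMatOfColumn_smul (d : R) (v : Fin 2 → R) :
    quatMatOfColumn (d • v) = quatMatOfColumn v * !![d, 0; 0, star d] := by
  ext i j
  fin_cases i <;> fin_cases j <;> simp [quatMatOfColumn] <;> ring

variable (S : Type*) [CommSemiring S] [Star S] [TrivialStar S] [Module S R] [StarModule S R]

def quatMatOfColumnₗ : (Fin 2 → R) →ₗ[S] Matrix (Fin 2) (Fin 2) R where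
  toFun := quatMatOfColumn
  map_add' v w := by
    ext i j
    fin_cases i <;> fin_cases j <;> simp [quatMatOfColumn, add_comm]
  map_smul' s v := by
    ext i j
    fin_cases i <;> fin_cases j <;> simp [quatMatOfColumn]

end

theorem quatMat_eq (q : ℍ[ℝ]) :
    quatMat q =
      !![⟨q.re, q.imI⟩, ⟨q.imJ, q.imK⟩; -star ⟨q.imJ, q.imK⟩, star ⟨q.re, q.imI⟩] := by
  ext i j
  fin_cases i <;> fin_cases j <;> simp [quatMat, Complex.ext_iff]

/- The images of `e₀, i e₀, e₁, i e₁` are `1`, `diag(i, -i)`, `!![0, -1; 1, 0]` and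
`!![0, i; i, 0]`, a `ℂ`-basis of `M₂(ℂ)`; the witness expands `M` in it. -/
theorem liftBaseChange_quatMatOfColumnₗ_surjective :
    Function.Surjective ((quatMatOfColumnₗ (R := ℂ) ℝ).liftBaseChange ℂ) := by
  intro M
  refine ⟨((M 0 0 + M 1 1) / 2) ⊗ₜ ![1, 0]
    + ((M 1 1 - M 0 0) / 2 * Complex.I) ⊗ₜ ![Complex.I, 0]
    + ((M 1 0 - M 0 1) / 2) ⊗ₜ ![0, 1]
    + (-((M 0 1 + M 1 0) / 2) * Complex.I) ⊗ₜ ![0, Complex.I], ?_⟩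
  ext i j
  fin_cases i <;> fin_cases j <;> simp [quatMatOfColumnₗ, quatMatOfColumn, mul_assoc] <;> ring

theorem liftBaseChange_quatMatOfColumnₗ_bijective :
    Function.Bijective ((quatMatOfColumnₗ (R := ℂ) ℝ).liftBaseChange ℂ) := by
  have hdim : Module.finrank ℂ (ℂ ⊗[ℝ] (Fin 2 → ℂ)) =
      Module.finrank ℂ (Matrix (Fin 2) (Fin 2) ℂ) := by
    rw [Module.finrank_baseChange]
    simp [Module.finrank_matrix, Module.finrank_pi_fintype, Complex.finrank_real_complex]
  have hsurj := liftBaseChange_quatMatOfColumnₗ_surjective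
  exact ⟨(LinearMap.injective_iff_surjective_of_finrank_eq_finrank hdim).mpr hsurj, hsurj⟩

/-- The `ℝ`-bilinear map sending `(v, c)` with `v = (a, b) ∈ ℂ²` (column vector) and
`c ∈ ℂ` to `[[a·c, −b̄·c],[b·c, ā·c]]` induces a bijective `ℂ`-linear map
`φ : ℂ² ⊗_ℝ ℂ → M₂(ℂ)` (with `ℂ` acting on the tensor factor carrying `c`, written on
the left in Mathlib) satisfying `φ((ρ(q)·v) ⊗ c) = ρ(q)·φ(v ⊗ c)` and
`φ((d·v) ⊗ c) = φ(v ⊗ c)·[[d, 0],[0, d̄]]`. -/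
theorem columnVectors_complexification :
    ∃ φ : (ℂ ⊗[ℝ] (Fin 2 → ℂ)) →ₗ[ℂ] Matrix (Fin 2) (Fin 2) ℂ,
      (∀ (c : ℂ) (v : Fin 2 → ℂ),
        φ (c ⊗ₜ v) = !![v 0 * c, -(star (v 1)) * c; v 1 * c, star (v 0) * c]) ∧
      Function.Bijective φ ∧
      (∀ (q : ℍ[ℝ]) (c : ℂ) (v : Fin 2 → ℂ),
        φ (c ⊗ₜ (quatMat q).mulVec v) = quatMat q * φ (c ⊗ₜ v)) ∧
      (∀ (d c : ℂ) (v : Fin 2 → ℂ),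
        φ (c ⊗ₜ (d • v)) = φ (c ⊗ₜ v) * !![d, 0; 0, star d]) := by
  set φ := (quatMatOfColumnₗ (R := ℂ) ℝ).liftBaseChange ℂ
  have hφ (c : ℂ) (v : Fin 2 → ℂ) : φ (c ⊗ₜ v) = c • quatMatOfColumn v := rfl
  refine ⟨φ, fun c v => ?_, liftBaseChange_quatMatOfColumnₗ_bijective, fun q c v => ?_,
    fun d c v => ?_⟩
  · rw [hφ, quatMatOfColumn]
    ext i j
    fin_cases i <;> fin_cases j <;> simp [mul_comm]
  · rw [hφ, hφ, quatMat_eq, quatMatOfColumn_mulVec, Matrix.mul_smul]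
  · rw [hφ, hφ, quatMatOfColumn_smul, Matrix.smul_mul]
end

section
/- Let ρ : ℍ → M₂(ℂ) be the embedding ρ(a + b·i + c·j + d·k) = [[a + b·i, c + d·i], [−c + d·i, a − b·i]], and regard the space of complex row vectors ℂ² as a right ℍ-module via v ↦ v·ρ(q). Then the ℝ-bilinear map sending (v, c) with v = (a, b) ∈ ℂ² and c ∈ ℂ to the matrix [[a·c, b·c], [−b̄·c, ā·c]] induces a bijective ℂ-linear map φ : ℂ² ⊗_ℝ ℂ → M₂(ℂ) (ℂ acting on the right tensor factor) which satisfies φ((v·ρ(q)) ⊗ c) = φ(v ⊗ c)·ρ(q) for all q ∈ ℍ, v ∈ ℂ², c ∈ ℂ, and φ((d·v) ⊗ c) = [[d, 0], [0, d̄]]·φ(v ⊗ c) for all d ∈ ℂ. -/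
/-!
Send the row vector `v = (a, b)` to the matrix `[[a, b], [-b̄, ā]]` with first row `v`. These
matrices are exactly the `ρ(q)` and are closed under products, so `[[a, b], [-b̄, ā]] ρ(q)` is
again of this shape, with first row `v ρ(q)`: this is the `ℍ`-equivariance. Extending
`ℂ`-linearly gives `φ`, which is onto because every complex matrix is `A + i B` with `A`, `B` in
the image of `ρ`, hence bijective since both sides have complex dimension `4`.
-/

open Quaternion Matrix TensorProduct

def quatMatOfRow : (Fin 2 → ℂ) →ₗ[ℝ] Matrix (Fin 2) (Fin 2) ℂ where
  toFun v := !![v 0, v 1; -star (v 1), star (v 0)]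
  map_add' v w := by
    ext i j
    fin_cases i <;> fin_cases j <;> simp [add_comm]
  map_smul' r v := by
    ext i j
    fin_cases i <;> fin_cases j <;> simp [Complex.real_smul]

theorem quatMatOfRow_apply (v : Fin 2 → ℂ) :
    quatMatOfRow v = !![v 0, v 1; -star (v 1), star (v 0)] := rfl

theorem quatMat_eq_quatMatOfRow (q : ℍ[ℝ]) :
    quatMat q = quatMatOfRow ![⟨q.re, q.imI⟩, ⟨q.imJ, q.imK⟩] := by
  ext i j
  fin_cases i <;> fin_cases j <;> simp [quatMat, quatMatOfRow_apply, Complex.ext_iff]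

theorem quatMatOfRow_vecMul (v w : Fin 2 → ℂ) :
    quatMatOfRow (v ᵥ* quatMatOfRow w) = quatMatOfRow v * quatMatOfRow w := by
  ext i j
  fin_cases i <;> fin_cases j <;>
    simp [quatMatOfRow_apply, mul_apply, Fin.sum_univ_two, vecHead, vecTail]
  ring

theorem quatMatOfRow_smul (d : ℂ) (v : Fin 2 → ℂ) :
    quatMatOfRow (d • v) = !![d, 0; 0, star d] * quatMatOfRow v := by
  ext i j
  fin_cases i <;> fin_cases j <;> simp [quatMatOfRow_apply, mul_apply, Fin.sum_univ_two]

theorem exists_quatMatOfRow_add_I_smul (M : Matrix (Fin 2) (Fin 2) ℂ) :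
    ∃ x y : Fin 2 → ℂ, quatMatOfRow x + Complex.I • quatMatOfRow y = M := by
  refine ⟨![(M 0 0 + star (M 1 1)) / 2, (M 0 1 - star (M 1 0)) / 2],
    ![(M 0 0 - star (M 1 1)) / (2 * Complex.I), (M 0 1 + star (M 1 0)) / (2 * Complex.I)], ?_⟩
  ext i j
  fin_cases i <;> fin_cases j <;> simp [quatMatOfRow_apply] <;> field_simp <;> ring

noncomputable def quatMatOfTensor : ℂ ⊗[ℝ] (Fin 2 → ℂ) →ₗ[ℂ] Matrix (Fin 2) (Fin 2) ℂ :=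
  quatMatOfRow.liftBaseChange ℂ

@[simp]
theorem quatMatOfTensor_tmul (c : ℂ) (v : Fin 2 → ℂ) :
    quatMatOfTensor (c ⊗ₜ v) = c • quatMatOfRow v := rfl

theorem quatMatOfTensor_surjective : Function.Surjective quatMatOfTensor := by
  intro M
  obtain ⟨x, y, hxy⟩ := exists_quatMatOfRow_add_I_smul M
  exact ⟨1 ⊗ₜ x + Complex.I ⊗ₜ y, by simpa using hxy⟩

theorem quatMatOfTensor_bijective : Function.Bijective quatMatOfTensor := by
  have hrank : Module.finrank ℂ (ℂ ⊗[ℝ] (Fin 2 → ℂ)) =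
      Module.finrank ℂ (Matrix (Fin 2) (Fin 2) ℂ) := by
    simp [Module.finrank_pi_fintype, Module.finrank_matrix]
  exact ⟨(LinearMap.injective_iff_surjective_of_finrank_eq_finrank hrank).mpr
    quatMatOfTensor_surjective, quatMatOfTensor_surjective⟩

/-- The `ℝ`-bilinear map sending `(v, c)` with `v = (a, b) ∈ ℂ²` (row vector) and
`c ∈ ℂ` to `[[a·c, b·c],[−b̄·c, ā·c]]` induces a bijective `ℂ`-linear map
`φ : ℂ² ⊗_ℝ ℂ → M₂(ℂ)` (with `ℂ` acting on the tensor factor carrying `c`, written on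
the left in Mathlib) satisfying `φ((v·ρ(q)) ⊗ c) = φ(v ⊗ c)·ρ(q)` and
`φ((d·v) ⊗ c) = [[d, 0],[0, d̄]]·φ(v ⊗ c)`. -/
theorem rowVectors_complexification :
    ∃ φ : (ℂ ⊗[ℝ] (Fin 2 → ℂ)) →ₗ[ℂ] Matrix (Fin 2) (Fin 2) ℂ,
      (∀ (c : ℂ) (v : Fin 2 → ℂ),
        φ (c ⊗ₜ v) = !![v 0 * c, v 1 * c; -(star (v 1)) * c, star (v 0) * c]) ∧
      Function.Bijective φ ∧
      (∀ (q : ℍ[ℝ]) (c : ℂ) (v : Fin 2 → ℂ),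
        φ (c ⊗ₜ Matrix.vecMul v (quatMat q)) = φ (c ⊗ₜ v) * quatMat q) ∧
      (∀ (d c : ℂ) (v : Fin 2 → ℂ),
        φ (c ⊗ₜ (d • v)) = !![d, 0; 0, star d] * φ (c ⊗ₜ v)) := by
  refine ⟨quatMatOfTensor, fun c v => ?_, quatMatOfTensor_bijective, fun q c v => ?_,
    fun d c v => ?_⟩
  · ext i j
    fin_cases i <;> fin_cases j <;> simp [quatMatOfRow_apply, mul_comm]
  · simp only [quatMatOfTensor_tmul, quatMat_eq_quatMatOfRow, quatMatOfRow_vecMul, smul_mul]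
  · simp only [quatMatOfTensor_tmul, quatMatOfRow_smul, Matrix.mul_smul]
end
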